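/- arXiv:1803.09444 — 4 statements merged into one kernel-verified Lean document; each statement's English description precedes it below -/
import Mathlib

section
/- (Convolution property of the Meixner distribution, Lemma 2.1(b).) For every α > 0, β ∈ (−π, π), d₁, d₂ > 0 and m₁, m₂ ∈ ℝ, the convolution of two Meixner densities with common scaling and skewness parameters is again a Meixner density: for all x ∈ ℝ, ∫_ℝ f(x − y; α, β, d₁, m₁) · f(y; α, β, d₂, m₂) dy = f(x; α, β, d₁ + d₂, m₁ + m₂). Consequently, if X₁ and X₂ are independent random variables with densities f(·; α, β, d₁, m₁) and f(·; α, β, d₂, m₂), then X₁ + X₂ has density f(·; α, β, d₁ + d₂, m₁ + m₂). -/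
/-!
With `σ` the logistic sigmoid, the kernel `k_{a,b}(t) = σ(t)^a σ(-t)^b` is Euler's Beta integrand
in the coordinate `u = σ(t)`, so its Fourier transform at `ξ` is `B(a - 2πiξ, b + 2πiξ)`; for
`a = b = d` this is `|Γ(d + 2πiξ)|² / Γ(2d)`. The kernels multiply, `k_{d₁,d₁} k_{d₂,d₂} =
k_{d₁+d₂,d₁+d₂}`, and the Fourier transform of a product is the convolution of the transforms, so
`|Γ(d₁ + i·)|² ∗ |Γ(d₂ + i·)|² = 2π Γ(2d₁) Γ(2d₂) / Γ(2(d₁ + d₂)) · |Γ(d₁ + d₂ + i·)|²`. The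
exponential tilt `e^{βx/α}` of the Meixner density is multiplicative and passes through the
convolution, after which the normalising constants match. The law of a sum of independent random
variables is the convolution of their laws, so the claim about `X₁ + X₂` follows from the one about
densities.
-/

open MeasureTheory Real Set

/-- The Meixner probability density with scaling parameter `α`, skewness parameter `β`,
peakedness parameter `d` and location parameter `m`. -/
noncomputable def meixnerDensity (α β d m : ℝ) (x : ℝ) : ℝ :=
  (2 * Real.cos (β / 2)) ^ (2 * d) / (2 * Real.pi * α * Real.Gamma (2 * d)) *
    Real.exp (β * (x - m) / α) *
    ‖Complex.Gamma ((d : ℂ) + Complex.I * (((x - m) / α : ℝ) : ℂ))‖ ^ 2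

open Complex FourierTransform
open scoped RealInnerProductSpace

section Sigmoid

variable {E : Type*} [NormedAddCommGroup E] [NormedSpace ℝ E]

lemma sigmoid_image_univ : sigmoid '' univ = Ioo 0 1 := by
  rw [image_univ, range_sigmoid]

lemma hasDerivWithinAt_sigmoid (t : ℝ) :
    HasDerivWithinAt sigmoid (sigmoid t * sigmoid (-t)) univ t := by
  simpa only [sigmoid_neg] using (hasDerivAt_sigmoid t).hasDerivWithinAt

lemma abs_sigmoid_mul_sigmoid_neg (t : ℝ) : |sigmoid t * sigmoid (-t)| = sigmoid t * sigmoid (-t) :=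
  abs_of_pos (mul_pos (sigmoid_pos t) (sigmoid_pos (-t)))

theorem integrableOn_Ioo_iff_integrable_sigmoid_smul (g : ℝ → E) :
    IntegrableOn g (Ioo 0 1) ↔ Integrable fun t ↦ (sigmoid t * sigmoid (-t)) • g (sigmoid t) := by
  simpa only [sigmoid_image_univ, abs_sigmoid_mul_sigmoid_neg, integrableOn_univ] using
    integrableOn_image_iff_integrableOn_abs_deriv_smul MeasurableSet.univ
      (fun t _ ↦ hasDerivWithinAt_sigmoid t) sigmoid_injective.injOn g

theorem integral_Ioo_eq_integral_sigmoid_smul (g : ℝ → E) :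
    ∫ u in Ioo 0 1, g u = ∫ t, (sigmoid t * sigmoid (-t)) • g (sigmoid t) := by
  simpa only [sigmoid_image_univ, abs_sigmoid_mul_sigmoid_neg, setIntegral_univ] using
    integral_image_eq_integral_abs_deriv_smul MeasurableSet.univ
      (fun t _ ↦ hasDerivWithinAt_sigmoid t) sigmoid_injective.injOn g

lemma log_sigmoid_neg (t : ℝ) : Real.log (sigmoid (-t)) = Real.log (sigmoid t) - t := by
  rw [← sigmoid_mul_rexp_neg, Real.log_mul (sigmoid_pos t).ne' (Real.exp_pos _).ne',
    Real.log_exp, sub_eq_add_neg]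

end Sigmoid

lemma Complex.ofReal_cpow_eq_exp {x : ℝ} (hx : 0 < x) (s : ℂ) :
    (x : ℂ) ^ s = Complex.exp (s * (Real.log x : ℂ)) := by
  rw [cpow_def_of_ne_zero (by exact_mod_cast hx.ne'), ← ofReal_log hx.le, mul_comm]

noncomputable def logisticBeta (a b : ℂ) (t : ℝ) : ℂ :=
  (sigmoid t : ℂ) ^ a * (sigmoid (-t) : ℂ) ^ b

lemma logisticBeta_eq_exp (a b : ℂ) (t : ℝ) :
    logisticBeta a b t = Complex.exp (a * Real.log (sigmoid t) + b * Real.log (sigmoid (-t))) := by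
  rw [logisticBeta, ofReal_cpow_eq_exp (sigmoid_pos t), ofReal_cpow_eq_exp (sigmoid_pos (-t)),
    Complex.exp_add]

lemma logisticBeta_mul (a b c e : ℂ) (t : ℝ) :
    logisticBeta a b t * logisticBeta c e t = logisticBeta (a + c) (b + e) t := by
  simp only [logisticBeta_eq_exp, ← Complex.exp_add]
  ring_nf

lemma continuous_logisticBeta (a b : ℂ) : Continuous (logisticBeta a b) := by
  have hslit : ∀ s : ℝ → ℝ, ∀ t, ((sigmoid (s t) : ℝ) : ℂ) ∈ slitPlane := fun s t ↦
    ofReal_mem_slitPlane.2 (sigmoid_pos _)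
  exact ((continuous_ofReal.comp continuous_sigmoid).cpow continuous_const (hslit id)).mul
    ((continuous_ofReal.comp (continuous_sigmoid.comp continuous_neg)).cpow continuous_const
      (hslit Neg.neg))

lemma sigmoid_smul_betaIntegrand (a b : ℂ) (t : ℝ) :
    (sigmoid t * sigmoid (-t)) • ((sigmoid t : ℂ) ^ (a - 1) * (1 - (sigmoid t : ℂ)) ^ (b - 1))
      = logisticBeta a b t := by
  have h₁ : (1 - (sigmoid t : ℂ)) = (sigmoid (-t) : ℂ) := by rw [sigmoid_neg]; push_cast; ring
  have h₂ : (sigmoid t : ℂ) ≠ 0 := by exact_mod_cast (sigmoid_pos t).ne'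
  have h₃ : (sigmoid (-t) : ℂ) ≠ 0 := by exact_mod_cast (sigmoid_pos (-t)).ne'
  rw [h₁, logisticBeta, Complex.real_smul, Complex.cpow_sub _ _ h₂, Complex.cpow_sub _ _ h₃,
    Complex.cpow_one, Complex.cpow_one]
  push_cast
  field_simp

theorem integral_logisticBeta (a b : ℂ) : ∫ t, logisticBeta a b t = betaIntegral a b := by
  rw [betaIntegral, intervalIntegral.integral_of_le zero_le_one, integral_Ioc_eq_integral_Ioo,
    integral_Ioo_eq_integral_sigmoid_smul]
  simp only [sigmoid_smul_betaIntegrand]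

theorem integrable_logisticBeta {a b : ℂ} (ha : 0 < a.re) (hb : 0 < b.re) :
    Integrable (logisticBeta a b) := by
  have h := (betaIntegral_convergent ha hb).1
  rw [integrableOn_Ioc_iff_integrableOn_Ioo, integrableOn_Ioo_iff_integrable_sigmoid_smul] at h
  simpa only [sigmoid_smul_betaIntegrand] using h

theorem fourier_logisticBeta (a b : ℂ) (ξ : ℝ) :
    𝓕 (logisticBeta a b) ξ = betaIntegral (a - 2 * π * ξ * I) (b + 2 * π * ξ * I) := by
  rw [Real.fourier_real_eq_integral_exp_smul, ← integral_logisticBeta]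
  congr 1 with t
  rw [smul_eq_mul, logisticBeta_eq_exp, logisticBeta_eq_exp, ← Complex.exp_add, log_sigmoid_neg]
  push_cast
  ring_nf

theorem Complex.norm_Gamma_le_Gamma_re {s : ℂ} (hs : 0 < s.re) : ‖Gamma s‖ ≤ Real.Gamma s.re := by
  rw [Gamma_eq_integral hs, Real.Gamma_eq_integral hs, GammaIntegral]
  refine (norm_integral_le_integral_norm _).trans_eq (setIntegral_congr_fun measurableSet_Ioi ?_)
  intro x hx
  simp only [norm_mul, norm_real, Real.norm_eq_abs, norm_cpow_eq_rpow_re_of_pos hx, sub_re, one_re,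
    abs_of_pos (Real.exp_pos (-x))]

noncomputable def gammaNormSq (d y : ℝ) : ℝ := ‖Complex.Gamma (d + I * y)‖ ^ 2

lemma gammaNormSq_nonneg (d y : ℝ) : 0 ≤ gammaNormSq d y := sq_nonneg _

lemma ofReal_gammaNormSq (d y : ℝ) :
    (gammaNormSq d y : ℂ) = Gamma (d - y * I) * Gamma (d + y * I) := by
  have hconj : (d : ℂ) - y * I = (starRingEnd ℂ) (d + y * I) := by
    apply Complex.ext <;> simp
  rw [gammaNormSq, mul_comm I, hconj, Gamma_conj, conj_mul', ofReal_pow]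

lemma gammaNormSq_le_div_add_sq {d : ℝ} (hd : 0 < d) (y : ℝ) :
    gammaNormSq d y ≤ Real.Gamma (d + 1) ^ 2 / (d ^ 2 + y ^ 2) := by
  have hs : (d + y * I : ℂ) ≠ 0 := fun h ↦ by simpa [hd.ne'] using congrArg re h
  have hrec : Gamma (d + y * I) = Gamma (d + y * I + 1) / (d + y * I) :=
    eq_div_of_mul_eq hs ((mul_comm _ _).trans (Gamma_add_one _ hs).symm)
  have hbound : ‖Gamma (d + y * I + 1)‖ ≤ Real.Gamma (d + 1) := by
    simpa using norm_Gamma_le_Gamma_re (s := d + y * I + 1) (by simpa using add_pos hd one_pos)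
  rw [gammaNormSq, mul_comm I, hrec, norm_div, div_pow, Complex.sq_norm (_ + _ * I),
    normSq_add_mul_I]
  gcongr

lemma continuous_gammaNormSq {d : ℝ} (hd : 0 < d) : Continuous (gammaNormSq d) := by
  refine (continuous_iff_continuousAt.2 fun y ↦ ?_).norm.pow 2
  refine (continuousAt_Gamma _ fun m h ↦ ?_).comp (by fun_prop)
  have hre : d = -m := by simpa using congrArg re h
  linarith [m.cast_nonneg (α := ℝ)]

lemma integrable_gammaNormSq {d : ℝ} (hd : 0 < d) : Integrable (gammaNormSq d) := by
  have hmajor : Integrable fun y : ℝ ↦ Real.Gamma (d + 1) ^ 2 / (d ^ 2 + y ^ 2) := by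
    refine ((integrable_inv_one_add_sq.comp_div hd.ne').const_mul
      (Real.Gamma (d + 1) ^ 2 / d ^ 2)).congr (.of_forall fun y ↦ ?_)
    field_simp
  refine hmajor.mono' (continuous_gammaNormSq hd).aestronglyMeasurable (.of_forall fun y ↦ ?_)
  rw [Real.norm_of_nonneg (gammaNormSq_nonneg d y)]
  exact gammaNormSq_le_div_add_sq hd y

lemma gammaNormSq_le_div_sq {d : ℝ} (hd : 0 < d) (y : ℝ) :
    gammaNormSq d y ≤ Real.Gamma (d + 1) ^ 2 / d ^ 2 :=
  (gammaNormSq_le_div_add_sq hd y).trans (by gcongr; nlinarith [sq_nonneg y])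

lemma integrable_gammaNormSq_sub_mul {d₁ d₂ : ℝ} (hd₁ : 0 < d₁) (hd₂ : 0 < d₂) (w : ℝ) :
    Integrable fun v ↦ gammaNormSq d₁ (w - v) * gammaNormSq d₂ v :=
  (integrable_gammaNormSq hd₂).bdd_mul
    ((continuous_gammaNormSq hd₁).comp (by fun_prop)).aestronglyMeasurable
    (.of_forall fun v ↦ by
      rw [Real.norm_of_nonneg (gammaNormSq_nonneg _ _)]
      exact gammaNormSq_le_div_sq hd₁ (w - v))

section FourierMul

variable {V : Type*} [NormedAddCommGroup V] [InnerProductSpace ℝ V] [FiniteDimensional ℝ V]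
  [MeasurableSpace V] [BorelSpace V]

theorem Real.fourier_mul_eq_integral {f g : V → ℂ} (hf : Integrable f) (hg : Integrable g)
    (hg_cont : Continuous g) (hFg : Integrable (𝓕 g)) (ξ : V) :
    𝓕 (f * g) ξ = ∫ η, 𝓕 f (ξ - η) * 𝓕 g η := by
  set e : V → V → ℂ := fun v w ↦ Complex.exp (↑(-2 * π * ⟪v, w⟫) * I)
  have he : ∀ v η, e v ξ * Complex.exp (↑(2 * π * ⟪η, v⟫) * I) = e v (ξ - η) := fun v η ↦ by
    simp only [e, ← Complex.exp_add, inner_sub_right, real_inner_comm η v]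
    push_cast; ring_nf
  have hint : Integrable (Function.uncurry fun v η ↦ e v (ξ - η) * (f v * 𝓕 g η))
      (volume.prod volume) :=
    (hf.mul_prod hFg).bdd_mul (c := 1) (by fun_prop)
      (.of_forall fun _ ↦ (norm_exp_ofReal_mul_I _).le)
  calc 𝓕 (f * g) ξ = ∫ v, e v ξ * (f v * ∫ η, Complex.exp (↑(2 * π * ⟪η, v⟫) * I) * 𝓕 g η) := by
        conv_lhs => rw [← hg_cont.fourierInv_fourier_eq hg hFg]
        simp only [Real.fourier_eq', Real.fourierInv_eq', smul_eq_mul, Pi.mul_apply, e]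
    _ = ∫ v, ∫ η, e v (ξ - η) * (f v * 𝓕 g η) := by
        congr 1 with v
        rw [← integral_const_mul, ← integral_const_mul]
        congr 1 with η
        rw [← he]; ring
    _ = ∫ η, ∫ v, e v (ξ - η) * (f v * 𝓕 g η) := integral_integral_swap hint
    _ = ∫ η, 𝓕 f (ξ - η) * 𝓕 g η := by
        congr 1 with η
        simp only [Real.fourier_eq' f, ← integral_mul_const, smul_eq_mul, mul_assoc, e]

end FourierMul

lemma fourier_logisticBeta_self {d : ℝ} (hd : 0 < d) (ξ : ℝ) :
    𝓕 (logisticBeta d d) ξ = (gammaNormSq d (2 * π * ξ) / Real.Gamma (2 * d) : ℝ) := by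
  rw [fourier_logisticBeta, betaIntegral_eq_Gamma_mul_div _ _ (by simpa using hd)
    (by simpa using hd), ofReal_div, ofReal_gammaNormSq, ← Gamma_ofReal]
  push_cast
  ring_nf

lemma integrable_fourier_logisticBeta_self {d : ℝ} (hd : 0 < d) :
    Integrable (𝓕 (logisticBeta d d)) := by
  simp_rw [funext (fourier_logisticBeta_self hd)]
  exact (((integrable_gammaNormSq hd).comp_mul_left' (by positivity)).div_const _).ofReal

theorem integral_gammaNormSq_sub_mul {d₁ d₂ : ℝ} (hd₁ : 0 < d₁) (hd₂ : 0 < d₂) (w : ℝ) :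
    ∫ v, gammaNormSq d₁ (w - v) * gammaNormSq d₂ v
      = 2 * π * Real.Gamma (2 * d₁) * Real.Gamma (2 * d₂) / Real.Gamma (2 * (d₁ + d₂))
          * gammaNormSq (d₁ + d₂) w := by
  have hπ : 0 < 2 * π := by positivity
  have hkernel : ∀ {d : ℝ}, 0 < d → Integrable (logisticBeta d d) := fun hd ↦
    integrable_logisticBeta (by simpa using hd) (by simpa using hd)
  have hmul : logisticBeta d₁ d₁ * logisticBeta d₂ d₂ = logisticBeta ↑(d₁ + d₂) ↑(d₁ + d₂) := by
    ext t; simp [logisticBeta_mul]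
  have hfourier : gammaNormSq (d₁ + d₂) w / Real.Gamma (2 * (d₁ + d₂))
      = (∫ η, gammaNormSq d₁ (w - 2 * π * η) * gammaNormSq d₂ (2 * π * η))
          / (Real.Gamma (2 * d₁) * Real.Gamma (2 * d₂)) := by
    have h := Real.fourier_mul_eq_integral (hkernel hd₁) (hkernel hd₂)
      (continuous_logisticBeta _ _) (integrable_fourier_logisticBeta_self hd₂) (w / (2 * π))
    simp only [hmul, fourier_logisticBeta_self hd₁, fourier_logisticBeta_self hd₂,
      fourier_logisticBeta_self (add_pos hd₁ hd₂), ← ofReal_mul, integral_complex_ofReal,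
      mul_div_cancel₀ _ hπ.ne', mul_sub, div_mul_div_comm, ofReal_inj] at h
    rw [h, integral_div]
  have hscale : ∫ η, gammaNormSq d₁ (w - 2 * π * η) * gammaNormSq d₂ (2 * π * η)
      = (2 * π)⁻¹ * ∫ v, gammaNormSq d₁ (w - v) * gammaNormSq d₂ v := by
    rw [Measure.integral_comp_mul_left (fun v ↦ gammaNormSq d₁ (w - v) * gammaNormSq d₂ v),
      abs_of_pos (inv_pos.2 hπ), smul_eq_mul]
  have hΓ : ∀ {d : ℝ}, 0 < d → Real.Gamma (2 * d) ≠ 0 := fun hd ↦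
    (Real.Gamma_pos_of_pos (by linarith)).ne'
  have := hΓ hd₁; have := hΓ hd₂; have := hΓ (add_pos hd₁ hd₂)
  rw [hscale] at hfourier
  field_simp at hfourier ⊢
  linear_combination -hfourier

theorem ProbabilityTheory.IndepFun.map_add_eq_withDensity_integral {Ω : Type*}
    {_ : MeasurableSpace Ω} {μ : Measure Ω} [IsFiniteMeasure μ] {X Y : Ω → ℝ} {f g : ℝ → ℝ}
    (hXY : IndepFun X Y μ) (hX : AEMeasurable X μ) (hY : AEMeasurable Y μ)
    (hf : Measurable f) (hg : Measurable g) (hf₀ : 0 ≤ f) (hg₀ : 0 ≤ g)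
    (hfg : ∀ x, Integrable fun y ↦ f (x - y) * g y)
    (hμX : μ.map X = volume.withDensity fun x ↦ ENNReal.ofReal (f x))
    (hμY : μ.map Y = volume.withDensity fun x ↦ ENNReal.ofReal (g x)) :
    μ.map (X + Y) = volume.withDensity fun x ↦ ENNReal.ofReal (∫ y, f (x - y) * g y) := by
  rw [hXY.map_add_eq_map_conv_map₀ hX hY, hμX, hμY,
    conv_withDensity_eq_lconvolution (by fun_prop) (by fun_prop), lconvolution_comm]
  congr 1 with x
  rw [lconvolution_def, ofReal_integral_eq_lintegral_ofReal (hfg x)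
    (.of_forall fun y ↦ mul_nonneg (hf₀ _) (hg₀ _))]
  congr 1 with y
  rw [ENNReal.ofReal_mul (hf₀ _), neg_add_eq_sub, mul_comm]

noncomputable def meixnerConst (α β d : ℝ) : ℝ :=
  (2 * Real.cos (β / 2)) ^ (2 * d) / (2 * Real.pi * α * Real.Gamma (2 * d))

lemma meixnerDensity_eq (α β d m x : ℝ) :
    meixnerDensity α β d m x
      = meixnerConst α β d * Real.exp (β * (x - m) / α) * gammaNormSq d ((x - m) / α) :=
  rfl

lemma two_mul_cos_half_pos {β : ℝ} (hβ : β ∈ Ioo (-π) π) : 0 < 2 * Real.cos (β / 2) :=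
  mul_pos two_pos (cos_pos_of_mem_Ioo ⟨by linarith [hβ.1], by linarith [hβ.2]⟩)

lemma meixnerConst_pos {α β d : ℝ} (hα : 0 < α) (hβ : β ∈ Ioo (-π) π) (hd : 0 < d) :
    0 < meixnerConst α β d := by
  have := Real.Gamma_pos_of_pos (by linarith : 0 < 2 * d)
  have := two_mul_cos_half_pos hβ
  unfold meixnerConst
  positivity

lemma meixnerConst_mul_meixnerConst {α β d₁ d₂ : ℝ} (hα : α ≠ 0) (hβ : β ∈ Ioo (-π) π)
    (hd₁ : 0 < d₁) (hd₂ : 0 < d₂) :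
    meixnerConst α β d₁ * meixnerConst α β d₂
        * (α * (2 * π * Real.Gamma (2 * d₁) * Real.Gamma (2 * d₂) / Real.Gamma (2 * (d₁ + d₂))))
      = meixnerConst α β (d₁ + d₂) := by
  have hΓ : ∀ {d : ℝ}, 0 < d → Real.Gamma (2 * d) ≠ 0 := fun hd ↦
    (Real.Gamma_pos_of_pos (by linarith)).ne'
  have := hΓ hd₁; have := hΓ hd₂; have := hΓ (add_pos hd₁ hd₂)
  unfold meixnerConst
  rw [mul_add, Real.rpow_add (two_mul_cos_half_pos hβ)]
  field_simp

lemma meixnerDensity_nonneg {α β d : ℝ} (hα : 0 < α) (hβ : β ∈ Ioo (-π) π) (hd : 0 < d)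
    (m x : ℝ) : 0 ≤ meixnerDensity α β d m x := by
  rw [meixnerDensity_eq]
  have := meixnerConst_pos hα hβ hd
  have := gammaNormSq_nonneg d ((x - m) / α)
  positivity

lemma continuous_meixnerDensity {d : ℝ} (hd : 0 < d) (α β m : ℝ) :
    Continuous (meixnerDensity α β d m) := by
  simp_rw [funext (meixnerDensity_eq α β d m)]
  exact (continuous_const.mul (by fun_prop)).mul ((continuous_gammaNormSq hd).comp (by fun_prop))

lemma meixnerDensity_sub_mul_meixnerDensity (α β d₁ d₂ m₁ m₂ x y : ℝ) :
    meixnerDensity α β d₁ m₁ (x - y) * meixnerDensity α β d₂ m₂ y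
      = meixnerConst α β d₁ * meixnerConst α β d₂ * Real.exp (β * (x - (m₁ + m₂)) / α)
        * (gammaNormSq d₁ ((x - (m₁ + m₂)) / α - (y - m₂) / α)
          * gammaNormSq d₂ ((y - m₂) / α)) := by
  have hlin : (x - y - m₁) / α = (x - (m₁ + m₂)) / α - (y - m₂) / α := by ring
  have hexp : β * (x - (m₁ + m₂)) / α = β * (x - y - m₁) / α + β * (y - m₂) / α := by ring
  rw [meixnerDensity_eq, meixnerDensity_eq, hexp, Real.exp_add, hlin]
  ring

section Convolution

variable {α β d₁ d₂ m₁ m₂ : ℝ}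

lemma integrable_meixnerDensity_sub_mul (hα : 0 < α) (hd₁ : 0 < d₁) (hd₂ : 0 < d₂) (x : ℝ) :
    Integrable fun y ↦ meixnerDensity α β d₁ m₁ (x - y) * meixnerDensity α β d₂ m₂ y := by
  simp_rw [meixnerDensity_sub_mul_meixnerDensity]
  exact (((integrable_gammaNormSq_sub_mul hd₁ hd₂ _).comp_div hα.ne').comp_sub_right m₂).const_mul _

theorem integral_meixnerDensity_sub_mul (hα : 0 < α) (hβ : β ∈ Ioo (-π) π) (hd₁ : 0 < d₁)
    (hd₂ : 0 < d₂) (x : ℝ) :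
    ∫ y, meixnerDensity α β d₁ m₁ (x - y) * meixnerDensity α β d₂ m₂ y
      = meixnerDensity α β (d₁ + d₂) (m₁ + m₂) x := by
  set G : ℝ → ℝ := fun v ↦ gammaNormSq d₁ ((x - (m₁ + m₂)) / α - v) * gammaNormSq d₂ v
  have hsubst : ∫ y, G ((y - m₂) / α) = α * ∫ v, G v := by
    rw [integral_sub_right_eq_self (fun z ↦ G (z / α)) m₂, Measure.integral_comp_div,
      abs_of_pos hα, smul_eq_mul]
  simp_rw [meixnerDensity_sub_mul_meixnerDensity, integral_const_mul]
  rw [hsubst, integral_gammaNormSq_sub_mul hd₁ hd₂, meixnerDensity_eq,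
    ← meixnerConst_mul_meixnerConst hα.ne' hβ hd₁ hd₂]
  ring

end Convolution

/-- Convolution property of the Meixner distribution (Lemma 2.1 (b)): Meixner densities
with common scaling and skewness parameters convolve to a Meixner density, and the sum of
independent Meixner random variables is again Meixner. -/
theorem meixnerDensity_convolution (α β d₁ d₂ m₁ m₂ : ℝ) (hα : 0 < α)
    (hβ : β ∈ Set.Ioo (-Real.pi) Real.pi) (hd₁ : 0 < d₁) (hd₂ : 0 < d₂) :
    (∀ x : ℝ, (∫ y : ℝ, meixnerDensity α β d₁ m₁ (x - y) * meixnerDensity α β d₂ m₂ y)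
        = meixnerDensity α β (d₁ + d₂) (m₁ + m₂) x) ∧
      ∀ {Ω : Type} [MeasurableSpace Ω] (μ : Measure Ω) [IsProbabilityMeasure μ]
        (X₁ X₂ : Ω → ℝ), Measurable X₁ → Measurable X₂ →
        ProbabilityTheory.IndepFun X₁ X₂ μ →
        μ.map X₁ = volume.withDensity (fun x => ENNReal.ofReal (meixnerDensity α β d₁ m₁ x)) →
        μ.map X₂ = volume.withDensity (fun x => ENNReal.ofReal (meixnerDensity α β d₂ m₂ x)) →
        μ.map (fun ω => X₁ ω + X₂ ω)
          = volume.withDensity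
              (fun x => ENNReal.ofReal (meixnerDensity α β (d₁ + d₂) (m₁ + m₂) x)) := by
  refine ⟨integral_meixnerDensity_sub_mul hα hβ hd₁ hd₂, ?_⟩
  intro Ω _ μ _ X₁ X₂ hX₁ hX₂ hindep hμ₁ hμ₂
  rw [← funext (integral_meixnerDensity_sub_mul hα hβ hd₁ hd₂)]
  exact hindep.map_add_eq_withDensity_integral hX₁.aemeasurable hX₂.aemeasurable
    (continuous_meixnerDensity hd₁ α β m₁).measurable
    (continuous_meixnerDensity hd₂ α β m₂).measurable
    (meixnerDensity_nonneg hα hβ hd₁ m₁) (meixnerDensity_nonneg hα hβ hd₂ m₂)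
    (integrable_meixnerDensity_sub_mul hα hd₁ hd₂) hμ₁ hμ₂
end

section
/- For every α > 0, β ∈ (−π, π) and δ > 0, the function z ↦ min(1, z²) · δ e^{β z / α} / (z · sinh(π z / α)) is Lebesgue-integrable on ℝ \ {0}; i.e. the Meixner Lévy density k satisfies ∫_{ℝ\{0}} (1 ∧ z²) k(z) dz < ∞, so that k(z) dz defines a Lévy measure. -/
/-!
Near the origin `sinh x ≥ x` gives `z² k(z) ≤ δ e^{|β|/α} α/π`, so `(1 ∧ z²) k` is bounded on
`(0, 1]`. For `z ≥ 1` the bound `2 sinh x ≥ eˣ (1 - e^{-2π/α})` (valid for `x ≥ π/α`) gives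
`k(z) = O(e^{-(π - β) z/α})`, integrable since `β < π`. The reflection `k_β(-z) = k_{-β}(z)` reduces
the negative half-line to the positive one, where `-π < β` is used; as `k` is linear in `δ`,
it suffices to treat `δ = 1`.
-/

open MeasureTheory Real Set

noncomputable def meixnerLevyDensity (α β δ : ℝ) (z : ℝ) : ℝ :=
  δ * Real.exp (β * z / α) / (z * Real.sinh (Real.pi * z / α))

theorem Real.exp_mul_one_sub_exp_le_two_mul_sinh {c x : ℝ} (h : c ≤ x) :
    exp x * (1 - exp (-(2 * c))) ≤ 2 * sinh x := by
  have hdecay : exp (-(2 * x)) ≤ exp (-(2 * c)) := exp_le_exp.2 (by linarith)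
  have hfactor : exp x * exp (-(2 * x)) = exp (-x) := by rw [← exp_add]; ring_nf
  rw [sinh_eq]
  nlinarith [exp_pos x]

theorem meixnerLevyDensity_neg (α β δ z : ℝ) :
    meixnerLevyDensity α β δ (-z) = meixnerLevyDensity α (-β) δ z := by
  simp only [meixnerLevyDensity, mul_neg, neg_mul, neg_div, sinh_neg, neg_neg]

section

variable {α β δ z : ℝ}

theorem meixnerLevyDensity_nonneg (hα : 0 < α) (hδ : 0 ≤ δ) : 0 ≤ meixnerLevyDensity α β δ z := by
  have hden : 0 ≤ z * sinh (π * z / α) := by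
    rcases le_total 0 z with hz | hz
    · exact mul_nonneg hz (sinh_nonneg_iff.2 (by positivity))
    · exact mul_nonneg_of_nonpos_of_nonpos hz
        (sinh_nonpos_iff.2 (div_nonpos_of_nonpos_of_nonneg (by nlinarith [pi_pos]) hα.le))
  exact div_nonneg (mul_nonneg hδ (exp_pos _).le) hden

theorem sq_mul_meixnerLevyDensity_le (hα : 0 < α) (hδ : 0 ≤ δ) (hz : 0 < z) (hz1 : z ≤ 1) :
    z ^ 2 * meixnerLevyDensity α β δ z ≤ δ * exp (|β| / α) * (α / π) := by
  have hsinh : π * z / α ≤ sinh (π * z / α) := self_le_sinh_iff.2 (by positivity)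
  have hexp : exp (β * z / α) ≤ exp (|β| / α) := by
    refine exp_le_exp.2 (div_le_div_of_nonneg_right ?_ hα.le)
    nlinarith [mul_nonneg (sub_nonneg.2 (le_abs_self β)) hz.le,
      mul_nonneg (abs_nonneg β) (sub_nonneg.2 hz1)]
  calc z ^ 2 * meixnerLevyDensity α β δ z
      = δ * exp (β * z / α) * (z / sinh (π * z / α)) := by
        unfold meixnerLevyDensity; field_simp
    _ ≤ δ * exp (|β| / α) * (z / (π * z / α)) := by gcongr
    _ = δ * exp (|β| / α) * (α / π) := by field_simp

theorem meixnerLevyDensity_le_of_one_le (hα : 0 < α) (hδ : 0 ≤ δ) (hz : 1 ≤ z) :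
    meixnerLevyDensity α β δ z ≤
      2 * δ / (1 - exp (-(2 * (π / α)))) * exp (-((π - β) / α) * z) := by
  have hgap : 0 < 1 - exp (-(2 * (π / α))) :=
    sub_pos.2 (exp_lt_one_iff.2 (neg_neg_of_pos (by positivity)))
  have hsinh : exp (π * z / α) * (1 - exp (-(2 * (π / α)))) ≤ 2 * sinh (π * z / α) :=
    exp_mul_one_sub_exp_le_two_mul_sinh (by
      rw [mul_div_right_comm]; exact le_mul_of_one_le_right (by positivity) hz)
  have hden : exp (π * z / α) * (1 - exp (-(2 * (π / α)))) / 2 ≤ z * sinh (π * z / α) := by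
    have : 0 ≤ sinh (π * z / α) := sinh_nonneg_iff.2 (by positivity)
    nlinarith
  calc meixnerLevyDensity α β δ z
      = δ * exp (β * z / α) / (z * sinh (π * z / α)) := rfl
    _ ≤ δ * exp (β * z / α) / (exp (π * z / α) * (1 - exp (-(2 * (π / α)))) / 2) := by
        gcongr
    _ = 2 * δ / (1 - exp (-(2 * (π / α)))) * exp (-((π - β) / α) * z) := by
        rw [show -((π - β) / α) * z = β * z / α - π * z / α by ring, exp_sub]
        field_simp

theorem integrableOn_Ioi_min_one_sq_mul_meixnerLevyDensity (hα : 0 < α) (hβ : β < π)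
    (hδ : 0 ≤ δ) :
    IntegrableOn (fun z => min 1 (z ^ 2) * meixnerLevyDensity α β δ z) (Ioi 0) := by
  have hmeas : AEStronglyMeasurable (fun z => min 1 (z ^ 2) * meixnerLevyDensity α β δ z) := by
    unfold meixnerLevyDensity; fun_prop
  have hnorm (z : ℝ) : ‖min 1 (z ^ 2) * meixnerLevyDensity α β δ z‖ =
      min 1 (z ^ 2) * meixnerLevyDensity α β δ z :=
    norm_of_nonneg (mul_nonneg (by positivity) (meixnerLevyDensity_nonneg hα hδ))
  rw [← Ioc_union_Ioi_eq_Ioi zero_le_one]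
  refine .union (.of_bound measure_Ioc_lt_top hmeas.restrict (δ * exp (|β| / α) * (α / π)) ?_)
    (Integrable.mono' ((exp_neg_integrableOn_Ioi 1 (div_pos (sub_pos.2 hβ) hα)).const_mul
      (2 * δ / (1 - exp (-(2 * (π / α)))))) hmeas.restrict ?_)
  · filter_upwards [ae_restrict_mem measurableSet_Ioc] with z ⟨hz, hz1⟩
    rw [hnorm]
    exact (mul_le_mul_of_nonneg_right (min_le_right _ _) (meixnerLevyDensity_nonneg hα hδ)).trans
      (sq_mul_meixnerLevyDensity_le hα hδ hz hz1)
  · filter_upwards [ae_restrict_mem measurableSet_Ioi] with z (hz : 1 < z)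
    rw [hnorm, min_eq_left (one_le_pow₀ hz.le), one_mul]
    exact meixnerLevyDensity_le_of_one_le hα hδ hz.le

end

theorem meixnerLevyDensity_levyMeasure_general (α β δ : ℝ) (hα : 0 < α)
    (hβ : β ∈ Set.Ioo (-Real.pi) Real.pi) :
    IntegrableOn (fun z : ℝ => min 1 (z ^ 2) * meixnerLevyDensity α β δ z) {0}ᶜ := by
  have hpos (β' : ℝ) (hβ' : β' < π) :=
    integrableOn_Ioi_min_one_sq_mul_meixnerLevyDensity (δ := 1) hα hβ' zero_le_one
  have hneg : IntegrableOn (fun z => min 1 (z ^ 2) * meixnerLevyDensity α β 1 z) (Iio 0) := by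
    have hreflected := hpos (-β) (by linarith [hβ.1])
    rw [← neg_zero] at hreflected
    simpa only [neg_sq, meixnerLevyDensity_neg, neg_neg] using hreflected.comp_neg_Iio
  have hscale : (fun z => min 1 (z ^ 2) * meixnerLevyDensity α β δ z) =
      fun z => δ * (min 1 (z ^ 2) * meixnerLevyDensity α β 1 z) := by
    funext z; simp only [meixnerLevyDensity]; ring
  rw [hscale, ← Iio_union_Ioi]
  exact (hneg.union (hpos β hβ.2)).const_mul δ

/-- The Meixner Lévy density integrates `1 ∧ z²` over `ℝ \ {0}`, hence defines a
Lévy measure. -/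
theorem meixnerLevyDensity_levyMeasure (α β δ : ℝ) (hα : 0 < α)
    (hβ : β ∈ Set.Ioo (-Real.pi) Real.pi) (hδ : 0 < δ) :
    IntegrableOn (fun z : ℝ => min 1 (z ^ 2) * meixnerLevyDensity α β δ z) {0}ᶜ :=
  meixnerLevyDensity_levyMeasure_general α β δ hα hβ
end

section
/- For every α > 0, β ∈ (−π, π) and δ > 0, the function z ↦ |z| · δ e^{β z / α} / (z · sinh(π z / α)) = δ e^{β z/α}/|sinh(π z/α)| is NOT Lebesgue-integrable on ℝ \ {0}; i.e. the Meixner Lévy density k satisfies ∫_{ℝ\{0}} |z| k(z) dz = ∞ (the associated Meixner–Lévy process has infinite variation). -/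
open MeasureTheory Real Set

/-!
Since `sinh y ~ y` and `exp y → 1` as `y → 0`, the function `|z| k(z)` behaves like
`δ α / (π |z|)` near the origin, and a function with such a pole is not integrable
on any interval around it.
-/

open Asymptotics Filter Topology

theorem isEquivalent_abs_mul_meixnerLevyDensity (α β δ : ℝ) :
    (fun z => |z| * meixnerLevyDensity α β δ z) ~[𝓝[≠] 0] fun z => δ * α / π * |z|⁻¹ := by
  have hlin (c : ℝ) : Tendsto (fun z : ℝ => c * z / α) (𝓝[≠] 0) (𝓝 0) :=
    ((continuous_const.mul continuous_id).div_const α).tendsto' 0 0 (by simp)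
      |>.mono_left nhdsWithin_le_nhds
  have hsinh : (fun z => sinh (π * z / α)) ~[𝓝[≠] 0] fun z => π * z / α :=
    Real.isEquivalent_sinh.comp_tendsto (hlin π)
  have hexp : (fun z => exp (β * z / α)) ~[𝓝[≠] 0] fun _ => 1 :=
    (isEquivalent_const_iff_tendsto one_ne_zero).2 (by simpa using (hlin β).rexp)
  refine (IsEquivalent.refl.mul <| (IsEquivalent.refl (u := fun _ => δ)).mul hexp
    |>.div (IsEquivalent.refl.mul hsinh)).congr_right ?_
  filter_upwards [self_mem_nhdsWithin] with z hz
  have hz0 : |z| ≠ 0 := abs_ne_zero.2 hz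
  calc |z| * (δ * 1 / (z * (π * z / α))) = |z| * (δ * α / π) / (z * z) := by
        field_simp
    _ = δ * α / π * |z|⁻¹ := by
        rw [← abs_mul_abs_self z]
        field_simp

theorem meixnerLevyDensity_infinite_variation_general (α β δ : ℝ) (hα : 0 < α)
    (hδ : 0 < δ) :
    ¬ IntegrableOn (fun z : ℝ => |z| * meixnerLevyDensity α β δ z) {0}ᶜ := by
  intro h
  have hpole : (fun z : ℝ => (z - 0)⁻¹) =O[𝓝[≠] 0]
      fun z => |z| * meixnerLevyDensity α β δ z := by
    refine IsBigO.trans ?_ (isEquivalent_abs_mul_meixnerLevyDensity α β δ).isBigO_symm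
    refine IsBigO.const_mul_right (by positivity) ?_
    simpa [← norm_inv] using (isBigO_refl (fun z : ℝ => z⁻¹) _).norm_right
  have hint : Integrable (fun z : ℝ => |z| * meixnerLevyDensity α β δ z) :=
    integrableOn_univ.1 <| h.congr_set_ae
      (ae_eq_univ.2 (by rw [compl_compl]; exact Real.volume_singleton)).symm
  exact not_intervalIntegrable_of_sub_inv_isBigO_punctured hpole (by norm_num : (-1 : ℝ) ≠ 1)
    (by rw [uIcc_of_le (by norm_num)]; norm_num) hint.intervalIntegrable

/-- The Meixner Lévy density does not integrate `|z|` over `ℝ \ {0}`: the associated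
Meixner–Lévy process has infinite variation. -/
theorem meixnerLevyDensity_infinite_variation (α β δ : ℝ) (hα : 0 < α)
    (hβ : β ∈ Set.Ioo (-Real.pi) Real.pi) (hδ : 0 < δ) :
    ¬ IntegrableOn (fun z : ℝ => |z| * meixnerLevyDensity α β δ z) {0}ᶜ :=
  meixnerLevyDensity_infinite_variation_general α β δ hα hδ
end

section
/- (Proposition 4.1: cliquet option price.) Let (Ω, F, Q) be a probability space and let R₁, …, R_n be independent, identically distributed real random variables with R_k > −1 almost surely. Let c ≥ 0 (local cap), g ∈ ℝ (guaranteed rate), and set Z_k := min(c, R_k) − g/n, which are i.i.d. bounded random variables. Then E[ max{0, Σ_{k=1}^n Z_k} ] = (n/2) · E[Z₁] + (1/π) ∫_{0}^{∞} (1 − Re( φ_Z(x) )) / x² dx, where φ_Z(x) := ( E[e^{i x Z₁}] )^n. Consequently, with notional K > 0, riskless rate r and maturity T, the cliquet option price C₀ = K e^{−rT} (1 + g + E[max{0, Σ_{k=1}^n Z_k}]) equals K e^{−rT} ( 1 + g + (n/2) E[Z₁] + (1/π) ∫_{0}^{∞} (1 − Re φ_Z(x)) / x² dx ). -/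
open MeasureTheory Real Set

/-!
Since `max 0 s = (s + |s|) / 2`, it suffices to express `E|S|` for `S = ∑ Z_k` through the
characteristic function of `S`, which by independence and identical distribution is `φ`.
Integrating `|a| = (2 / π) ∫₀^∞ (1 - cos (a x)) / x² dx` against the law of `S` does this
(Tonelli). The case `a = 1` follows by writing `x⁻² = ∫₀^∞ t e^{-xt} dt` and integrating
in `x` first, where `∫₀^∞ (1 - cos x) e^{-tx} dx = (t (1 + t²))⁻¹`.
-/

lemma lintegral_ofReal_eq_ofReal_of_integral_eq {α : Type*} [MeasurableSpace α] {μ : Measure α}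
    {f : α → ℝ} {c : ℝ} (hf : 0 ≤ᵐ[μ] f) (h : ∫ a, f a ∂μ = c) (hc : c ≠ 0) :
    ∫⁻ a, ENNReal.ofReal (f a) ∂μ = ENNReal.ofReal c := by
  rw [← ofReal_integral_eq_lintegral_ofReal (Integrable.of_integral_ne_zero (h ▸ hc)) hf, h]

lemma integral_mul_exp_neg_mul_Ioi {r : ℝ} (hr : 0 < r) :
    ∫ t in Ioi 0, t * exp (-(r * t)) = (r ^ 2)⁻¹ := by
  have := integral_rpow_mul_exp_neg_mul_Ioi two_pos hr
  norm_num [Real.Gamma_two, inv_pow] at this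
  exact this

lemma integral_one_sub_cos_mul_exp_neg_mul_Ioi {t : ℝ} (ht : 0 < t) :
    ∫ x in Ioi 0, (1 - cos x) * exp (-(t * x)) = (t * (1 + t ^ 2))⁻¹ := by
  have h1 : (-(t : ℂ)).re < 0 := by simpa using ht
  have h2 : (-(t : ℂ) + Complex.I).re < 0 := by simpa using ht
  have hint₁ := integrableOn_exp_mul_complex_Ioi h1 0
  have hint₂ := integrableOn_exp_mul_complex_Ioi h2 0
  calc ∫ x in Ioi 0, (1 - cos x) * exp (-(t * x))
      = ∫ x : ℝ in Ioi 0, (Complex.exp (-t * x) - Complex.exp ((-t + Complex.I) * x)).re := by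
        congr with x
        rw [sub_mul, one_mul, mul_comm (cos x)]
        simp [Complex.exp_re]
    _ = (∫ x : ℝ in Ioi 0, (Complex.exp (-t * x) - Complex.exp ((-t + Complex.I) * x))).re :=
        integral_re (hint₁.sub hint₂)
    _ = ((t : ℂ)⁻¹ + (-t + Complex.I)⁻¹).re := by
        rw [integral_sub hint₁ hint₂, integral_exp_mul_complex_Ioi h1,
          integral_exp_mul_complex_Ioi h2]
        simp [neg_div]
    _ = (t * (1 + t ^ 2))⁻¹ := by
        simp [Complex.normSq_apply, field, add_comm]

lemma one_sub_cos_nonneg (x : ℝ) : 0 ≤ 1 - cos x := sub_nonneg.2 (cos_le_one x)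

lemma integral_one_sub_cos_div_sq_Ioi : ∫ x in Ioi 0, (1 - cos x) / x ^ 2 = π / 2 := by
  set F : ℝ → ℝ → ℝ := fun x t => (1 - cos x) * (t * exp (-(x * t)))
  have hF_meas : Measurable (Function.uncurry fun x t => ENNReal.ofReal (F x t)) := by
    fun_prop
  have inner_t : ∀ x ∈ Ioi (0 : ℝ),
      ∫⁻ t in Ioi 0, ENNReal.ofReal (F x t) = ENNReal.ofReal ((1 - cos x) / x ^ 2) := by
    intro x (hx : 0 < x)
    have ht : ∫⁻ t in Ioi 0, ENNReal.ofReal (t * exp (-(x * t))) = ENNReal.ofReal (x ^ 2)⁻¹ :=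
      lintegral_ofReal_eq_ofReal_of_integral_eq
        ((ae_restrict_iff' measurableSet_Ioi).2 (ae_of_all _ fun t (ht : 0 < t) => by positivity))
        (integral_mul_exp_neg_mul_Ioi hx) (by positivity)
    simp_rw [F, ENNReal.ofReal_mul (one_sub_cos_nonneg _)]
    rw [lintegral_const_mul _ (by fun_prop), ht, ← ENNReal.ofReal_mul (one_sub_cos_nonneg _),
      div_eq_mul_inv]
  have inner_x : ∀ t ∈ Ioi (0 : ℝ),
      ∫⁻ x in Ioi 0, ENNReal.ofReal (F x t) = ENNReal.ofReal (1 + t ^ 2)⁻¹ := by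
    intro t (ht : 0 < t)
    refine lintegral_ofReal_eq_ofReal_of_integral_eq
      (ae_of_all _ fun x => mul_nonneg (one_sub_cos_nonneg x) (by positivity)) ?_ (by positivity)
    calc ∫ x in Ioi 0, F x t = ∫ x in Ioi 0, t * ((1 - cos x) * exp (-(t * x))) := by
          simp only [F]; congr 1; ext x; ring_nf
      _ = (1 + t ^ 2)⁻¹ := by
          rw [integral_const_mul, integral_one_sub_cos_mul_exp_neg_mul_Ioi ht]
          field_simp
  have hnonneg : 0 ≤ᵐ[volume.restrict (Ioi (0 : ℝ))] fun x => (1 - cos x) / x ^ 2 :=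
    ae_of_all _ fun x => div_nonneg (one_sub_cos_nonneg x) (sq_nonneg x)
  calc ∫ x in Ioi 0, (1 - cos x) / x ^ 2
      = (∫⁻ x in Ioi 0, ENNReal.ofReal ((1 - cos x) / x ^ 2)).toReal :=
        integral_eq_lintegral_of_nonneg_ae hnonneg (Measurable.aestronglyMeasurable (by fun_prop))
    _ = (∫⁻ t in Ioi 0, ∫⁻ x in Ioi 0, ENNReal.ofReal (F x t)).toReal := by
        rw [← setLIntegral_congr_fun measurableSet_Ioi inner_t,
          lintegral_lintegral_swap hF_meas.aemeasurable]
    _ = (∫⁻ t in Ioi 0, ENNReal.ofReal (1 + t ^ 2)⁻¹).toReal := by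
        rw [setLIntegral_congr_fun measurableSet_Ioi inner_x]
    _ = π / 2 := by
        rw [lintegral_ofReal_eq_ofReal_of_integral_eq (c := π / 2)
          (ae_of_all _ fun t => by positivity) (by simp) (by positivity),
          ENNReal.toReal_ofReal (by positivity)]

lemma integral_one_sub_cos_mul_div_sq_Ioi (a : ℝ) :
    ∫ x in Ioi 0, (1 - cos (a * x)) / x ^ 2 = π * |a| / 2 := by
  rcases eq_or_ne a 0 with rfl | ha
  · simp
  have hb : 0 < |a| := abs_pos.2 ha
  have hscale : ∀ x ∈ Ioi (0 : ℝ),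
      (1 - cos (a * x)) / x ^ 2 = |a| ^ 2 * ((1 - cos (|a| * x)) / (|a| * x) ^ 2) := by
    intro x (hx : 0 < x)
    rw [← cos_abs (a * x), abs_mul, abs_of_pos hx]
    field_simp
  rw [setIntegral_congr_fun measurableSet_Ioi hscale, integral_const_mul,
    integral_comp_mul_left_Ioi (fun y => (1 - cos y) / y ^ 2) 0 hb, mul_zero,
    integral_one_sub_cos_div_sq_Ioi, smul_eq_mul]
  field_simp

lemma lintegral_one_sub_cos_mul_div_sq_Ioi (a : ℝ) :
    ∫⁻ x in Ioi 0, ENNReal.ofReal ((1 - cos (a * x)) / x ^ 2) = ENNReal.ofReal (π * |a| / 2) := by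
  rcases eq_or_ne a 0 with rfl | ha
  · simp
  exact lintegral_ofReal_eq_ofReal_of_integral_eq
    (ae_of_all _ fun x => div_nonneg (one_sub_cos_nonneg _) (sq_nonneg x))
    (integral_one_sub_cos_mul_div_sq_Ioi a) (by positivity)

lemma re_charFun_eq_integral_cos (ν : Measure ℝ) [IsFiniteMeasure ν] (x : ℝ) :
    (charFun ν x).re = ∫ y, cos (x * y) ∂ν := by
  have hint : Integrable (fun y : ℝ => Complex.exp (x * y * Complex.I)) ν :=
    Integrable.of_bound (by fun_prop) 1
      (ae_of_all _ fun y => by rw [← Complex.ofReal_mul, Complex.norm_exp_ofReal_mul_I])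
  rw [charFun_apply_real, ← RCLike.re_to_complex, ← integral_re hint]
  push_cast [← Complex.ofReal_mul]
  simp only [RCLike.re_to_complex, Complex.exp_ofReal_mul_I_re]

theorem integral_one_sub_re_charFun_div_sq_Ioi (ν : Measure ℝ) [IsProbabilityMeasure ν] :
    ∫ x in Ioi 0, (1 - (charFun ν x).re) / x ^ 2 = π / 2 * ∫ y, |y| ∂ν := by
  set G : ℝ → ℝ → ℝ := fun x y => (1 - cos (y * x)) / x ^ 2
  have hG_nonneg : ∀ x y, 0 ≤ G x y := fun x y => div_nonneg (one_sub_cos_nonneg _) (sq_nonneg x)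
  have hcos_int : ∀ x, Integrable (fun y => cos (y * x)) ν := fun x =>
    Integrable.of_bound (by fun_prop) 1 (ae_of_all _ fun y => by simpa using abs_cos_le_one _)
  have hG_int : ∀ x, Integrable (G x) ν := fun x =>
    ((integrable_const 1).sub (hcos_int x)).div_const _
  have hcharFun : ∀ x, (1 - (charFun ν x).re) / x ^ 2 = ∫ y, G x y ∂ν := by
    intro x
    simp_rw [G, integral_div, integral_sub (integrable_const 1) (hcos_int x),
      re_charFun_eq_integral_cos, mul_comm x]
    simp
  have hinner_meas : AEStronglyMeasurable (fun x => ∫ y, G x y ∂ν) (volume.restrict (Ioi 0)) :=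
    (Measurable.stronglyMeasurable (f := Function.uncurry G)
      (by fun_prop)).integral_prod_right'.aestronglyMeasurable
  calc ∫ x in Ioi 0, (1 - (charFun ν x).re) / x ^ 2
      = (∫⁻ x in Ioi 0, ENNReal.ofReal (∫ y, G x y ∂ν)).toReal := by
        simp_rw [hcharFun]
        exact integral_eq_lintegral_of_nonneg_ae
          (ae_of_all _ fun x => integral_nonneg (hG_nonneg x)) hinner_meas
    _ = (∫⁻ y, (∫⁻ x in Ioi 0, ENNReal.ofReal (G x y)) ∂ν).toReal := by
        rw [setLIntegral_congr_fun measurableSet_Ioi fun x _ => ofReal_integral_eq_lintegral_ofReal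
          (hG_int x) (ae_of_all _ (hG_nonneg x)),
          lintegral_lintegral_swap (by fun_prop)]
    _ = ∫ y, π / 2 * |y| ∂ν := by
        rw [lintegral_congr fun y => lintegral_one_sub_cos_mul_div_sq_Ioi y,
          integral_eq_lintegral_of_nonneg_ae (ae_of_all _ fun y => by positivity) (by fun_prop)]
        ring_nf
    _ = π / 2 * ∫ y, |y| ∂ν := integral_const_mul _ _

section

variable {Ω : Type*} [MeasurableSpace Ω] {μ : Measure Ω}

lemma charFun_map_real_eq_integral {X : Ω → ℝ} (hX : AEMeasurable X μ) (x : ℝ) :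
    charFun (μ.map X) x = ∫ ω, Complex.exp (Complex.I * x * X ω) ∂μ := by
  rw [charFun_apply_real, integral_map hX (by fun_prop)]
  congr with ω
  ring_nf

namespace ProbabilityTheory

lemma iIndepFun.charFun_map_fun_sum_eq_pow {ι E : Type*} [Fintype ι] [MeasurableSpace E]
    [NormedAddCommGroup E] [InnerProductSpace ℝ E] [BorelSpace E] [SecondCountableTopology E]
    {X : ι → Ω → E} (hX : iIndepFun X μ) (mX : ∀ i, AEMeasurable (X i) μ) {i₀ : ι}
    (hident : ∀ i, IdentDistrib (X i) (X i₀) μ μ) :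
    charFun (μ.map fun ω => ∑ i, X i ω) = charFun (μ.map (X i₀)) ^ Fintype.card ι := by
  rw [hX.charFun_map_fun_sum_eq_prod mX]
  simp [fun i => (hident i).map_eq]

end ProbabilityTheory

lemma integral_max_zero_eq {f : Ω → ℝ} (hf : Integrable f μ) :
    ∫ ω, max 0 (f ω) ∂μ = ((∫ ω, f ω ∂μ) + ∫ ω, |f ω| ∂μ) / 2 := by
  have hmax : ∀ s : ℝ, max 0 s = (s + |s|) / 2 := fun s => by
    rcases le_total s 0 with h | h
    · rw [abs_of_nonpos h, max_eq_left h]; ring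
    · rw [abs_of_nonneg h, max_eq_right h]; ring
  simp_rw [hmax]
  rw [integral_div, integral_add hf hf.abs]

lemma integrable_min_of_ae_lt [IsFiniteMeasure μ] {R : Ω → ℝ} (hR : AEStronglyMeasurable R μ)
    {a : ℝ} (ha : ∀ᵐ ω ∂μ, a < R ω) (c : ℝ) : Integrable (fun ω => min c (R ω)) μ := by
  refine Integrable.of_bound (by fun_prop) (max |min a c| |c|) ?_
  filter_upwards [ha] with ω hω
  exact abs_le_max_abs_abs (le_min (min_le_right a c) ((min_le_left a c).trans hω.le))
    (min_le_left c _)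

end

theorem cliquet_option_price_general {Ω : Type*} [MeasurableSpace Ω]
    (μ : Measure Ω) [IsProbabilityMeasure μ]
    (n : ℕ) (hn : 1 ≤ n) (R : Fin n → Ω → ℝ)
    (hmeas : ∀ k, Measurable (R k))
    (hindep : ProbabilityTheory.iIndepFun R μ)
    (hident : ∀ k, ProbabilityTheory.IdentDistrib (R k) (R ⟨0, hn⟩) μ μ)
    (hfloor : ∀ k, ∀ᵐ ω ∂μ, -1 < R k ω)
    (c g : ℝ)
    (Z : Fin n → Ω → ℝ) (hZ : ∀ k ω, Z k ω = min c (R k ω) - g / n)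
    (φ : ℝ → ℂ)
    (hφ : ∀ x : ℝ, φ x = (∫ ω, Complex.exp (Complex.I * (x : ℂ) * (Z ⟨0, hn⟩ ω : ℂ)) ∂μ) ^ n)
    (K r T : ℝ) :
    (∫ ω, max 0 (∑ k, Z k ω) ∂μ)
        = (n / 2) * (∫ ω, Z ⟨0, hn⟩ ω ∂μ) +
          (1 / Real.pi) * ∫ x in Set.Ioi (0 : ℝ), (1 - (φ x).re) / x ^ 2 ∧
      K * Real.exp (-r * T) * (1 + g + ∫ ω, max 0 (∑ k, Z k ω) ∂μ)
        = K * Real.exp (-r * T) *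
            (1 + g + (n / 2) * (∫ ω, Z ⟨0, hn⟩ ω ∂μ) +
              (1 / Real.pi) * ∫ x in Set.Ioi (0 : ℝ), (1 - (φ x).re) / x ^ 2) := by
  set k₀ : Fin n := ⟨0, hn⟩
  set S : Ω → ℝ := fun ω => ∑ k, Z k ω
  have hZ_comp : Z = fun k => (fun t => min c t - g / n) ∘ R k := funext fun k => funext (hZ k)
  have hf_meas : Measurable fun t : ℝ => min c t - g / n := by fun_prop
  have hZ_meas : ∀ k, Measurable (Z k) := fun k => hZ_comp ▸ hf_meas.comp (hmeas k)
  have hZ_indep : ProbabilityTheory.iIndepFun Z μ :=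
    hZ_comp ▸ hindep.comp _ fun _ => hf_meas
  have hZ_ident : ∀ k, ProbabilityTheory.IdentDistrib (Z k) (Z k₀) μ μ := fun k =>
    hZ_comp ▸ (hident k).comp hf_meas
  have hZ_int : ∀ k, Integrable (Z k) μ := fun k => hZ_comp ▸
    (integrable_min_of_ae_lt (hmeas k).aestronglyMeasurable (hfloor k) c).sub (integrable_const _)
  have hS_int : Integrable S μ := integrable_finsetSum _ fun k _ => hZ_int k
  have hS_mean : ∫ ω, S ω ∂μ = n * ∫ ω, Z k₀ ω ∂μ := by
    simp [S, integral_finsetSum _ fun k _ => hZ_int k, fun k => (hZ_ident k).integral_eq]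
  have hφ_charFun : ∀ x, φ x = charFun (μ.map S) x := fun x => by
    rw [hφ, ← charFun_map_real_eq_integral (hZ_meas k₀).aemeasurable,
      hZ_indep.charFun_map_fun_sum_eq_pow (fun k => (hZ_meas k).aemeasurable) hZ_ident]
    simp
  have hfourier : ∫ x in Ioi 0, (1 - (φ x).re) / x ^ 2 = π / 2 * ∫ ω, |S ω| ∂μ := by
    have := Measure.isProbabilityMeasure_map (μ := μ) hS_int.aemeasurable
    simp_rw [hφ_charFun]
    rw [integral_one_sub_re_charFun_div_sq_Ioi,
      integral_map hS_int.aemeasurable (by fun_prop)]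
  have hprice : ∫ ω, max 0 (S ω) ∂μ = n / 2 * (∫ ω, Z k₀ ω ∂μ) +
      1 / π * ∫ x in Ioi 0, (1 - (φ x).re) / x ^ 2 := by
    rw [integral_max_zero_eq hS_int, hS_mean, hfourier]
    field_simp
  exact ⟨hprice, by rw [hprice]; ring⟩

/-- Proposition 4.1 (cliquet option price): for i.i.d. period returns `R k > -1` and
capped rates `Z k = min c (R k) - g/n`, the expectation of the positive part of the sum
of capped rates admits the Fourier representation
`E[max{0, Σ Z_k}] = (n/2) E[Z₁] + (1/π) ∫₀^∞ (1 - Re φ_Z(x))/x² dx`, and consequently the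
cliquet option price `C₀ = K e^{-rT}(1 + g + E[max{0, Σ Z_k}])` equals
`K e^{-rT}(1 + g + (n/2) E[Z₁] + (1/π) ∫₀^∞ (1 - Re φ_Z(x))/x² dx)`. -/
theorem cliquet_option_price {Ω : Type*} [MeasurableSpace Ω]
    (μ : Measure Ω) [IsProbabilityMeasure μ]
    (n : ℕ) (hn : 1 ≤ n) (R : Fin n → Ω → ℝ)
    (hmeas : ∀ k, Measurable (R k))
    (hindep : ProbabilityTheory.iIndepFun R μ)
    (hident : ∀ k, ProbabilityTheory.IdentDistrib (R k) (R ⟨0, hn⟩) μ μ)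
    (hfloor : ∀ k, ∀ᵐ ω ∂μ, -1 < R k ω)
    (c g : ℝ) (hc : 0 ≤ c)
    (Z : Fin n → Ω → ℝ) (hZ : ∀ k ω, Z k ω = min c (R k ω) - g / n)
    (φ : ℝ → ℂ)
    (hφ : ∀ x : ℝ, φ x = (∫ ω, Complex.exp (Complex.I * (x : ℂ) * (Z ⟨0, hn⟩ ω : ℂ)) ∂μ) ^ n)
    (K r T : ℝ) (hK : 0 < K) :
    (∫ ω, max 0 (∑ k, Z k ω) ∂μ)
        = (n / 2) * (∫ ω, Z ⟨0, hn⟩ ω ∂μ) +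
          (1 / Real.pi) * ∫ x in Set.Ioi (0 : ℝ), (1 - (φ x).re) / x ^ 2 ∧
      K * Real.exp (-r * T) * (1 + g + ∫ ω, max 0 (∑ k, Z k ω) ∂μ)
        = K * Real.exp (-r * T) *
            (1 + g + (n / 2) * (∫ ω, Z ⟨0, hn⟩ ω ∂μ) +
              (1 / Real.pi) * ∫ x in Set.Ioi (0 : ℝ), (1 - (φ x).re) / x ^ 2) :=
  cliquet_option_price_general μ n hn R hmeas hindep hident hfloor c g Z hZ φ hφ K r T
end
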